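/- For $|q|<1$ and any nonnegative integer $c$, the identity $\sum_{m=0}^\infty q^m \frac{(q;q)_{2m+c}}{(q;q)_{m+c}(q;q)_m} = \frac{1}{(q;q)_\infty}\sum_{k=0}^\infty (-1)^k q^{\frac{3}{2}k^2 + (c+\frac{3}{2})k}$ holds. -/

import Mathlib

/-!
Both sides, as functions of `c`, satisfy the recurrence
`X (c + 1) - X c = q ^ (c + 3) * (X (c + 3) - q * X (c + 4))`: for the left side this follows
from the two q-Pascal rules, for the partial theta series from shifting the summation index.
As `c → ∞` the left side tends to `∑ q^m / (q;q)_m`, which is `1 / (q;q)_∞` by Euler's identity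
(itself the limit of one of the Pascal recurrences), and the theta series tends to `1`.
So the difference `D` of the two sides tends to `0`. Summing the recurrence from `c` to `∞`
bounds `‖D c‖` by `O(‖q‖ ^ c)` times the supremum of `‖D‖` beyond `c`, which forces `D` to
vanish for large `c`; running the recurrence backwards, `D` vanishes identically.
-/

/-- The q-Pochhammer symbol `(q; q)_n`. -/
def qPoch (q : ℂ) (n : ℕ) : ℂ := ∏ j ∈ Finset.range n, (1 - q ^ (j + 1))

open Filter Topology Finset

variable {q z : ℂ}

lemma qPoch_zero : qPoch q 0 = 1 := prod_range_zero _

lemma qPoch_succ (n : ℕ) : qPoch q (n + 1) = qPoch q n * (1 - q ^ (n + 1)) :=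
  prod_range_succ _ _

lemma norm_pow_lt_one (hq : ‖q‖ < 1) {n : ℕ} (hn : n ≠ 0) : ‖q ^ n‖ < 1 := by
  rw [norm_pow]
  exact pow_lt_one₀ (norm_nonneg q) hq hn

lemma one_sub_pow_ne_zero (hq : ‖q‖ < 1) {n : ℕ} (hn : n ≠ 0) : 1 - q ^ n ≠ 0 :=
  sub_ne_zero.mpr fun h => (norm_pow_lt_one hq hn).ne (by rw [← h, norm_one])

lemma qPoch_ne_zero (hq : ‖q‖ < 1) (n : ℕ) : qPoch q n ≠ 0 :=
  prod_ne_zero_iff.mpr fun j _ => one_sub_pow_ne_zero hq j.succ_ne_zero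

noncomputable def qPochInf (q : ℂ) : ℂ := ∏' j : ℕ, (1 - q ^ (j + 1))

lemma summable_norm_neg_pow_succ (hq : ‖q‖ < 1) : Summable fun j : ℕ => ‖-q ^ (j + 1)‖ := by
  simpa only [norm_neg, norm_pow] using
    (summable_nat_add_iff 1).mpr (summable_geometric_of_lt_one (norm_nonneg q) hq)

lemma tendsto_qPoch (hq : ‖q‖ < 1) : Tendsto (qPoch q) atTop (𝓝 (qPochInf q)) := by
  have hmul := multipliable_one_add_of_summable (summable_norm_neg_pow_succ hq)
  simp only [← sub_eq_add_neg] at hmul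
  exact hmul.tendsto_prod_tprod_nat

lemma qPochInf_ne_zero (hq : ‖q‖ < 1) : qPochInf q ≠ 0 := by
  have h := tprod_one_add_ne_zero_of_summable
    (fun j => by simpa only [← sub_eq_add_neg] using one_sub_pow_ne_zero hq j.succ_ne_zero)
    (summable_norm_neg_pow_succ hq)
  simp only [← sub_eq_add_neg] at h
  exact h

/-- `(q;q)_n` converges to a nonzero limit, hence is bounded and bounded away from `0`. -/
lemma exists_norm_qPoch_le (hq : ‖q‖ < 1) :
    ∃ C, ∀ n, ‖qPoch q n‖ ≤ C ∧ ‖(qPoch q n)⁻¹‖ ≤ C := by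
  obtain ⟨C₁, hC₁⟩ := isBounded_iff_forall_norm_le.mp
    (Metric.isBounded_range_of_tendsto _ (tendsto_qPoch hq))
  obtain ⟨C₂, hC₂⟩ := isBounded_iff_forall_norm_le.mp
    (Metric.isBounded_range_of_tendsto _ ((tendsto_qPoch hq).inv₀ (qPochInf_ne_zero hq)))
  exact ⟨max C₁ C₂, fun n => ⟨(hC₁ _ ⟨n, rfl⟩).trans (le_max_left _ _),
    (hC₂ _ ⟨n, rfl⟩).trans (le_max_right _ _)⟩⟩

/-- The Gaussian binomial coefficient `[a + b, a]_q`. -/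
noncomputable def qBinom (q : ℂ) (a b : ℕ) : ℂ := qPoch q (a + b) / (qPoch q a * qPoch q b)

lemma qBinom_zero_right {a : ℕ} (ha : qPoch q a ≠ 0) : qBinom q a 0 = 1 := by
  rw [qBinom, add_zero, qPoch_zero, mul_one, div_self ha]

lemma qBinom_succ_succ {a b : ℕ} (ha : qPoch q (a + 1) ≠ 0) (hb : qPoch q (b + 1) ≠ 0) :
    qBinom q (a + 1) (b + 1) = qBinom q (a + 1) b + q ^ (b + 1) * qBinom q a (b + 1) := by
  rw [qPoch_succ, mul_ne_zero_iff] at ha hb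
  rw [qBinom, qBinom, qBinom, show a + 1 + (b + 1) = a + b + 1 + 1 by ring,
    show a + 1 + b = a + b + 1 by ring, show a + (b + 1) = a + b + 1 by ring,
    qPoch_succ (a + b + 1), qPoch_succ a, qPoch_succ b]
  field_simp [ha.1, ha.2, hb.1, hb.2]
  ring

lemma qBinom_succ_succ' {a b : ℕ} (ha : qPoch q (a + 1) ≠ 0) (hb : qPoch q (b + 1) ≠ 0) :
    qBinom q (a + 1) (b + 1) = q ^ (a + 1) * qBinom q (a + 1) b + qBinom q a (b + 1) := by
  rw [qPoch_succ, mul_ne_zero_iff] at ha hb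
  rw [qBinom, qBinom, qBinom, show a + 1 + (b + 1) = a + b + 1 + 1 by ring,
    show a + 1 + b = a + b + 1 by ring, show a + (b + 1) = a + b + 1 by ring,
    qPoch_succ (a + b + 1), qPoch_succ a, qPoch_succ b]
  field_simp [ha.1, ha.2, hb.1, hb.2]
  ring

lemma exists_norm_qBinom_le (hq : ‖q‖ < 1) : ∃ C, ∀ a b, ‖qBinom q a b‖ ≤ C := by
  obtain ⟨C, hC⟩ := exists_norm_qPoch_le hq
  have hC0 : 0 ≤ C := (norm_nonneg _).trans (hC 0).1
  refine ⟨C * C * C, fun a b => ?_⟩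
  rw [qBinom, div_eq_mul_inv, mul_inv, ← mul_assoc, norm_mul, norm_mul]
  exact mul_le_mul (mul_le_mul (hC _).1 (hC _).2 (norm_nonneg _) hC0) (hC _).2 (norm_nonneg _)
    (by positivity)

lemma tendsto_qBinom_atTop (hq : ‖q‖ < 1) (b : ℕ) :
    Tendsto (fun a => qBinom q a b) atTop (𝓝 (qPoch q b)⁻¹) := by
  have hP := tendsto_qPoch hq
  have h := (hP.comp (tendsto_add_atTop_nat b)).div (hP.mul_const (qPoch q b))
    (mul_ne_zero (qPochInf_ne_zero hq) (qPoch_ne_zero hq b))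
  rwa [mul_comm, div_mul_cancel_right₀ (qPochInf_ne_zero hq)] at h

lemma tsum_sub_tsum_eq_tsum_succ {G : Type*} [AddCommGroup G] [TopologicalSpace G]
    [IsTopologicalAddGroup G] [T2Space G] {f g h : ℕ → G} (hf : Summable f) (hg : Summable g)
    (h0 : f 0 = g 0) (hsucc : ∀ m, f (m + 1) - g (m + 1) = h m) :
    ∑' m, f m - ∑' m, g m = ∑' m, h m := by
  rw [← hf.tsum_sub hg, (hf.sub hg).tsum_eq_zero_add]
  simp [h0, hsucc]

lemma tendsto_tsum_of_dominated_of_tendsto_succ {E : Type*} [NormedAddCommGroup E]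
    [CompleteSpace E] {f : ℕ → ℕ → E} {bound : ℕ → ℝ} {a : E} (h_sum : Summable bound)
    (h_bound : ∀ n k, ‖f n k‖ ≤ bound k) (h_zero : ∀ n, f n 0 = a)
    (h_succ : ∀ k, Tendsto (fun n => f n (k + 1)) atTop (𝓝 0)) :
    Tendsto (fun n => ∑' k, f n k) atTop (𝓝 a) := by
  have h := tendsto_tsum_of_dominated_convergence (𝓕 := atTop) (g := Pi.single 0 a) h_sum
    (fun k => ?_) (Eventually.of_forall h_bound)
  · rwa [tsum_pi_single] at h
  · cases k with
    | zero => simp [h_zero]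
    | succ k => simpa using h_succ k

noncomputable def fineSeries (q z : ℂ) (c : ℕ) : ℂ := ∑' m, z ^ m * qBinom q (m + c) m

noncomputable def eulerSeries (q z : ℂ) : ℂ := ∑' m, z ^ m / qPoch q m

lemma exists_norm_fineSeries_term_le (hq : ‖q‖ < 1) :
    ∃ C, ∀ z c m, ‖z ^ m * qBinom q (m + c) m‖ ≤ C * ‖z‖ ^ m := by
  obtain ⟨C, hC⟩ := exists_norm_qBinom_le hq
  refine ⟨C, fun z c m => ?_⟩
  rw [norm_mul, norm_pow, mul_comm]
  exact mul_le_mul_of_nonneg_right (hC _ _) (by positivity)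

lemma summable_fineSeries (hq : ‖q‖ < 1) (hz : ‖z‖ < 1) (c : ℕ) :
    Summable fun m => z ^ m * qBinom q (m + c) m := by
  obtain ⟨C, hC⟩ := exists_norm_fineSeries_term_le hq
  exact .of_norm_bounded ((summable_geometric_of_lt_one (norm_nonneg z) hz).mul_left C) (hC z c)

lemma tendsto_fineSeries (hq : ‖q‖ < 1) (hz : ‖z‖ < 1) :
    Tendsto (fineSeries q z) atTop (𝓝 (eulerSeries q z)) := by
  obtain ⟨C, hC⟩ := exists_norm_fineSeries_term_le hq
  refine tendsto_tsum_of_dominated_convergence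
    ((summable_geometric_of_lt_one (norm_nonneg z) hz).mul_left C) (fun m => ?_)
    (Eventually.of_forall (hC z))
  have h := (tendsto_qBinom_atTop hq m).comp (tendsto_atTop_mono (Nat.le_add_left · m) tendsto_id)
  simpa only [div_eq_mul_inv, Function.comp_def] using h.const_mul (z ^ m)

lemma fineSeries_succ_sub (hq : ‖q‖ < 1) (hz : ‖z‖ < 1) (c : ℕ) :
    fineSeries q z (c + 1) - fineSeries q z c = z * q ^ (c + 2) * fineSeries q (z * q) (c + 2) := by
  rw [fineSeries, fineSeries, fineSeries, ← tsum_mul_left]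
  refine tsum_sub_tsum_eq_tsum_succ (summable_fineSeries hq hz _) (summable_fineSeries hq hz _)
    (by simp [qBinom_zero_right (qPoch_ne_zero hq _)]) fun m => ?_
  rw [show m + 1 + (c + 1) = m + c + 1 + 1 by ring, show m + 1 + c = m + c + 1 by ring,
    show m + (c + 2) = m + c + 1 + 1 by ring,
    qBinom_succ_succ' (qPoch_ne_zero hq _) (qPoch_ne_zero hq _)]
  ring

lemma fineSeries_succ_sub_mul (hq : ‖q‖ < 1) (hz : ‖z‖ < 1) (c : ℕ) :
    fineSeries q z (c + 1) - fineSeries q (z * q) c = z * fineSeries q z (c + 2) := by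
  have hzq : ‖z * q‖ < 1 :=
    (norm_mul_le z q).trans_lt (mul_lt_one_of_nonneg_of_lt_one_left (norm_nonneg z) hz hq.le)
  rw [fineSeries, fineSeries, fineSeries, ← tsum_mul_left]
  refine tsum_sub_tsum_eq_tsum_succ (summable_fineSeries hq hz _) (summable_fineSeries hq hzq _)
    (by simp [qBinom_zero_right (qPoch_ne_zero hq _)]) fun m => ?_
  rw [show m + 1 + (c + 1) = m + c + 1 + 1 by ring, show m + 1 + c = m + c + 1 by ring,
    show m + (c + 2) = m + c + 1 + 1 by ring,
    qBinom_succ_succ (qPoch_ne_zero hq _) (qPoch_ne_zero hq _)]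
  ring

lemma eulerSeries_sub_eulerSeries_mul (hq : ‖q‖ < 1) (hz : ‖z‖ < 1) :
    eulerSeries q z - eulerSeries q (z * q) = z * eulerSeries q z := by
  have hzq : ‖z * q‖ < 1 :=
    (norm_mul_le z q).trans_lt (mul_lt_one_of_nonneg_of_lt_one_left (norm_nonneg z) hz hq.le)
  have hS := tendsto_fineSeries hq hz
  refine tendsto_nhds_unique (((hS.comp (tendsto_add_atTop_nat 1)).sub
    (tendsto_fineSeries hq hzq)).congr fun c => ?_)
    ((hS.comp (tendsto_add_atTop_nat 2)).const_mul z)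
  exact fineSeries_succ_sub_mul hq hz c

lemma eulerSeries_self_mul_qPoch (hq : ‖q‖ < 1) (n : ℕ) :
    eulerSeries q q * qPoch q n = eulerSeries q (q ^ (n + 1)) := by
  induction n with
  | zero => rw [qPoch_zero, mul_one, zero_add, pow_one]
  | succ n ih =>
    rw [qPoch_succ, ← mul_assoc, ih, pow_succ q (n + 1)]
    linear_combination eulerSeries_sub_eulerSeries_mul hq (norm_pow_lt_one hq n.add_one_ne_zero)

lemma tendsto_eulerSeries_pow_succ (hq : ‖q‖ < 1) :
    Tendsto (fun n : ℕ => eulerSeries q (q ^ (n + 1))) atTop (𝓝 1) := by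
  obtain ⟨C, hC⟩ := exists_norm_qPoch_le hq
  refine tendsto_tsum_of_dominated_of_tendsto_succ
    ((summable_geometric_of_lt_one (norm_nonneg q) hq).mul_left C) (fun n k => ?_)
    (fun n => by simp [qPoch_zero]) (fun k => ?_)
  · rw [div_eq_mul_inv, norm_mul, ← pow_mul, norm_pow, mul_comm]
    exact mul_le_mul (hC k).2
      (pow_le_pow_of_le_one (norm_nonneg q) hq.le (Nat.le_mul_of_pos_left k n.succ_pos))
      (by positivity) ((norm_nonneg _).trans (hC 0).2)
  · have h := ((tendsto_pow_atTop_nhds_zero_of_norm_lt_one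
      (norm_pow_lt_one hq k.add_one_ne_zero)).comp
      (tendsto_add_atTop_nat 1)).div_const (qPoch q (k + 1))
    simpa only [Function.comp_def, ← pow_mul, mul_comm (k + 1), zero_div] using h

lemma eulerSeries_self (hq : ‖q‖ < 1) : eulerSeries q q = 1 / qPochInf q := by
  rw [eq_div_iff (qPochInf_ne_zero hq)]
  exact tendsto_nhds_unique ((tendsto_qPoch hq).const_mul _)
    ((tendsto_eulerSeries_pow_succ hq).congr fun n => (eulerSeries_self_mul_qPoch hq n).symm)

def thetaExp (c k : ℕ) : ℕ := (3 * k ^ 2 + (2 * c + 3) * k) / 2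

lemma thetaExp_succ (c k : ℕ) : thetaExp c (k + 1) = thetaExp (c + 3) k + (c + 3) := by
  rw [thetaExp, thetaExp, ← Nat.add_mul_div_right _ _ two_pos]
  congr 1
  ring

lemma le_thetaExp (c k : ℕ) : k ≤ thetaExp c k := by
  rw [thetaExp, Nat.le_div_iff_mul_le two_pos]
  nlinarith

noncomputable def partialTheta (q : ℂ) (c : ℕ) : ℂ := ∑' k : ℕ, (-1 : ℂ) ^ k * q ^ thetaExp c k

lemma norm_partialTheta_term (c k : ℕ) :
    ‖(-1 : ℂ) ^ k * q ^ thetaExp c k‖ = ‖q‖ ^ thetaExp c k := by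
  simp [norm_pow]

lemma norm_partialTheta_term_le (hq : ‖q‖ < 1) (c k : ℕ) :
    ‖(-1 : ℂ) ^ k * q ^ thetaExp c k‖ ≤ ‖q‖ ^ k := by
  rw [norm_partialTheta_term]
  exact pow_le_pow_of_le_one (norm_nonneg q) hq.le (le_thetaExp c k)

lemma summable_partialTheta (hq : ‖q‖ < 1) (c : ℕ) :
    Summable fun k : ℕ => (-1 : ℂ) ^ k * q ^ thetaExp c k :=
  .of_norm_bounded (summable_geometric_of_lt_one (norm_nonneg q) hq)
    (norm_partialTheta_term_le hq c)

lemma tendsto_partialTheta (hq : ‖q‖ < 1) : Tendsto (partialTheta q) atTop (𝓝 1) := by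
  refine tendsto_tsum_of_dominated_of_tendsto_succ (summable_geometric_of_lt_one (norm_nonneg q) hq)
    (norm_partialTheta_term_le hq) (fun c => by simp [thetaExp]) (fun k => ?_)
  refine squeeze_zero_norm (fun c => ?_) (tendsto_pow_atTop_nhds_zero_of_lt_one (norm_nonneg q) hq)
  rw [norm_partialTheta_term, thetaExp_succ]
  exact pow_le_pow_of_le_one (norm_nonneg q) hq.le (by omega)

def FineRecurrence (q : ℂ) (X : ℕ → ℂ) : Prop :=
  ∀ c, X (c + 1) - X c = q ^ (c + 3) * (X (c + 3) - q * X (c + 4))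

lemma FineRecurrence.sub_const_mul {X Y : ℕ → ℂ} (hX : FineRecurrence q X)
    (hY : FineRecurrence q Y) (a : ℂ) : FineRecurrence q fun c => X c - a * Y c := fun c => by
  linear_combination hX c - a * hY c

lemma fineRecurrence_fineSeries (hq : ‖q‖ < 1) : FineRecurrence q (fineSeries q q) := fun c => by
  have h := fineSeries_succ_sub_mul hq hq (c + 2)
  rw [show c + 2 + 1 = c + 3 from rfl, show c + 2 + 2 = c + 4 from rfl] at h
  linear_combination fineSeries_succ_sub hq hq c - q ^ (c + 3) * h

lemma fineRecurrence_partialTheta (hq : ‖q‖ < 1) : FineRecurrence q (partialTheta q) := fun c => by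
  have hs := summable_partialTheta hq
  calc partialTheta q (c + 1) - partialTheta q c
      = ∑' k : ℕ, q ^ (c + 3) * ((-1 : ℂ) ^ k * q ^ thetaExp (c + 3) k
          - q * ((-1 : ℂ) ^ k * q ^ thetaExp (c + 4) k)) :=
        tsum_sub_tsum_eq_tsum_succ (hs _) (hs _) (by simp [thetaExp]) fun k => by
          rw [thetaExp_succ, thetaExp_succ, show c + 1 + 3 = c + 4 from rfl]
          ring
    _ = q ^ (c + 3) * (partialTheta q (c + 3) - q * partialTheta q (c + 4)) := by
        rw [tsum_mul_left, (hs _).tsum_sub ((hs _).mul_left q), tsum_mul_left]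
        rfl

lemma eventually_nonpos_of_le_mul_pow_mul {e : ℕ → ℝ} {M K r : ℝ} (hM : ∀ c, e c ≤ M)
    (hK : 0 ≤ K) (hr0 : 0 ≤ r) (hr1 : r < 1)
    (h : ∀ c B, (∀ c' ≥ c, e c' ≤ B) → e c ≤ K * r ^ c * B) : ∀ᶠ c in atTop, e c ≤ 0 := by
  set M' := max M 0
  have hiter : ∀ n c, e c ≤ M' * (K * r ^ c) ^ n := by
    intro n
    induction n with
    | zero => exact fun c => by simpa only [pow_zero, mul_one] using (hM c).trans (le_max_left M 0)
    | succ n ih =>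
      intro c
      calc e c ≤ K * r ^ c * (M' * (K * r ^ c) ^ n) := h c _ fun c' hc' => (ih c').trans <|
            mul_le_mul_of_nonneg_left (pow_le_pow_left₀ (by positivity) (mul_le_mul_of_nonneg_left
              (pow_le_pow_of_le_one hr0 hr1.le hc') hK) n) (le_max_right M 0)
        _ = M' * (K * r ^ c) ^ (n + 1) := by ring
  have hsmall : ∀ᶠ c in atTop, K * r ^ c < 1 := by
    have := (tendsto_pow_atTop_nhds_zero_of_lt_one hr0 hr1).const_mul K
    rw [mul_zero] at this
    exact this.eventually_lt_const one_pos
  filter_upwards [hsmall] with c hc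
  have hlim := (tendsto_pow_atTop_nhds_zero_of_lt_one (by positivity) hc).const_mul M'
  rw [mul_zero] at hlim
  exact ge_of_tendsto' hlim fun n => hiter n c

namespace FineRecurrence

variable {X : ℕ → ℂ}

/-- Summing the recurrence from `c` to `∞` expresses `X c` through the later values of `X`,
with a factor `q ^ c`. -/
lemma norm_le (hq : ‖q‖ < 1) (hX : FineRecurrence q X) (hX0 : Tendsto X atTop (𝓝 0)) {c : ℕ}
    {B : ℝ} (hB : ∀ c' ≥ c, ‖X c'‖ ≤ B) : ‖X c‖ ≤ 2 / (1 - ‖q‖) * ‖q‖ ^ c * B := by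
  set r := ‖q‖
  have hB0 : 0 ≤ B := (norm_nonneg _).trans (hB c le_rfl)
  have hstep : ∀ i, ‖X (c + i + 1) - X (c + i)‖ ≤ 2 * B * r ^ c * r ^ i := by
    intro i
    have hpair : ‖X (c + i + 3) - q * X (c + i + 4)‖ ≤ 2 * B :=
      calc _ ≤ ‖X (c + i + 3)‖ + r * ‖X (c + i + 4)‖ :=
            (norm_sub_le _ _).trans_eq (by rw [norm_mul])
        _ ≤ B + 1 * B := add_le_add (hB _ (by omega))
            (mul_le_mul hq.le (hB _ (by omega)) (norm_nonneg _) zero_le_one)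
        _ = 2 * B := by ring
    rw [hX, norm_mul, norm_pow]
    calc r ^ (c + i + 3) * ‖X (c + i + 3) - q * X (c + i + 4)‖ ≤ r ^ (c + i) * (2 * B) :=
          mul_le_mul (pow_le_pow_of_le_one (norm_nonneg q) hq.le (by omega)) hpair
            (norm_nonneg _) (by positivity)
      _ = 2 * B * r ^ c * r ^ i := by ring
  have hgeom : ∀ N, ∑ i ∈ range N, r ^ i ≤ 1 / (1 - r) := fun N => by
    simpa using geom_sum_Ico_le_of_lt_one (m := 0) (n := N) (norm_nonneg q) hq
  have hpartial : ∀ N, ‖X c‖ ≤ ‖X (c + N)‖ + 2 / (1 - r) * r ^ c * B := by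
    intro N
    have htel : X (c + N) - X c = ∑ i ∈ range N, (X (c + i + 1) - X (c + i)) :=
      (sum_range_sub (fun i => X (c + i)) N).symm
    calc ‖X c‖ ≤ ‖X (c + N)‖ + ‖X (c + N) - X c‖ := by
          simpa only [norm_sub_rev] using norm_le_insert' (X c) (X (c + N))
      _ ≤ ‖X (c + N)‖ + ∑ i ∈ range N, 2 * B * r ^ c * r ^ i := by
          rw [htel]
          gcongr
          exact norm_sum_le_of_le _ fun i _ => hstep i
      _ ≤ ‖X (c + N)‖ + 2 * B * r ^ c * (1 / (1 - r)) := by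
          rw [← mul_sum]
          exact add_le_add_right (mul_le_mul_of_nonneg_left (hgeom N)
            (mul_nonneg (mul_nonneg zero_le_two hB0) (pow_nonneg (norm_nonneg q) c))) _
      _ = ‖X (c + N)‖ + 2 / (1 - r) * r ^ c * B := by ring
  have hlim := ((hX0.comp (tendsto_atTop_mono (Nat.le_add_left · c) tendsto_id)).norm).add_const
    (2 / (1 - r) * r ^ c * B)
  rw [norm_zero, zero_add] at hlim
  exact ge_of_tendsto' hlim hpartial

lemma eq_zero_of_eventually_eq_zero (hX : FineRecurrence q X) (h : ∀ᶠ c in atTop, X c = 0) :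
    X = 0 := by
  obtain ⟨C, hC⟩ := eventually_atTop.mp h
  suffices ∀ n c, C ≤ c + n → X c = 0 from funext fun c => this C c (by omega)
  intro n
  induction n with
  | zero => exact hC
  | succ n ih =>
    intro c hc
    have hc' := hX c
    rw [ih (c + 1) (by omega), ih (c + 3) (by omega), ih (c + 4) (by omega)] at hc'
    simpa using hc'

lemma eq_zero_of_tendsto (hq : ‖q‖ < 1) (hX : FineRecurrence q X)
    (hX0 : Tendsto X atTop (𝓝 0)) : X = 0 := by
  obtain ⟨M, hM⟩ := isBounded_iff_forall_norm_le.mp (Metric.isBounded_range_of_tendsto X hX0)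
  have hK : 0 ≤ 2 / (1 - ‖q‖) := div_nonneg zero_le_two (sub_pos.mpr hq).le
  refine hX.eq_zero_of_eventually_eq_zero ?_
  filter_upwards [eventually_nonpos_of_le_mul_pow_mul (e := fun c => ‖X c‖)
    (fun c => hM _ ⟨c, rfl⟩) hK (norm_nonneg q) hq fun c B hB => hX.norm_le hq hX0 hB] with c hc
  exact norm_le_zero_iff.mp hc

end FineRecurrence

/-- Fine's identity (25.96), specialized. -/
theorem fine_identity (q : ℂ) (hq : ‖q‖ < 1) (c : ℕ) :
    ∑' m : ℕ, q ^ m * qPoch q (2 * m + c) / (qPoch q (m + c) * qPoch q m) =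
      (1 / ∏' j : ℕ, (1 - q ^ (j + 1))) *
        ∑' k : ℕ, (-1 : ℂ) ^ k * q ^ ((3 * k ^ 2 + (2 * c + 3) * k) / 2) := by
  have hrec := (fineRecurrence_fineSeries hq).sub_const_mul (fineRecurrence_partialTheta hq)
    (1 / qPochInf q)
  have hlim := (tendsto_fineSeries hq hq).sub ((tendsto_partialTheta hq).const_mul (1 / qPochInf q))
  rw [mul_one, eulerSeries_self hq, sub_self] at hlim
  have h := congrFun (hrec.eq_zero_of_tendsto hq hlim) c
  rw [Pi.zero_apply, sub_eq_zero] at h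
  calc _ = fineSeries q q c :=
        tsum_congr fun m => by rw [qBinom, mul_div_assoc, two_mul, add_right_comm]
    _ = _ := h
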